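/- Let A be a unital ℂ-algebra with a finite complete family of orthogonal idempotents (e_s)_{s∈I}, A₀ their ℂ-span, and φ₀ an involutive anti-automorphism of A with φ₀(e_s) = e_s. For δ ∈ DDer(A) define φ₁(δ)(a) := (φ₀⊗φ₀)((δ(φ₀(a)))^∘). Then: (1) φ₁(δ) ∈ DDer(A); (2) φ₁ is involutive: φ₁(φ₁(δ)) = δ; (3) the A-bimodule structure transforms as φ₁(a δ b) = φ₀(b) φ₁(δ) φ₀(a) for all a,b ∈ A, δ ∈ DDer(A). -/
import Mathlib


open TensorProduct

noncomputable section

namespace Stmt7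

variable {A : Type*} [Ring A] [Algebra ℂ A]

/-- The flip `(c ⊗ d)^∘ = d ⊗ c` on `A ⊗[ℂ] A`. -/
def flipT : A ⊗[ℂ] A →ₗ[ℂ] A ⊗[ℂ] A := (TensorProduct.comm ℂ A A).toLinearMap

/-- The outer bimodule structure `a ⬝ (d' ⊗ d'') ⬝ b = (a d') ⊗ (d'' b)`. -/
def outerAct (a b : A) : A ⊗[ℂ] A →ₗ[ℂ] A ⊗[ℂ] A :=
  TensorProduct.map (LinearMap.mulLeft ℂ a) (LinearMap.mulRight ℂ b)

/-- The inner bimodule structure `a ∗ (d' ⊗ d'') ∗ b = (d' b) ⊗ (a d'')`. -/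
def innerAct (a b : A) : A ⊗[ℂ] A →ₗ[ℂ] A ⊗[ℂ] A :=
  TensorProduct.map (LinearMap.mulRight ℂ b) (LinearMap.mulLeft ℂ a)

variable {I : Type*} [Fintype I] [DecidableEq I]

/-- `(e s)` is a complete family of orthogonal idempotents. -/
def IsCompleteOrthIdem (e : I → A) : Prop :=
  (∀ s t : I, e s * e t = if s = t then e s else 0) ∧ (∑ s, e s = 1)

/-- `δ` is a double derivation of `A` relative to `A₀ = ⊕ₛ ℂ eₛ`:
it kills `A₀` and satisfies the Leibniz rule for the outer bimodule structure. -/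
def IsDoubleDer (e : I → A) (δ : A →ₗ[ℂ] A ⊗[ℂ] A) : Prop :=
  (∀ s : I, δ (e s) = 0) ∧
  ∀ a b : A, δ (a * b) = outerAct 1 b (δ a) + outerAct a 1 (δ b)

/-- `φ` is an involutive anti-automorphism of `A` fixing the idempotents. -/
def IsAntiInvolution (e : I → A) (φ : A →ₗ[ℂ] A) : Prop :=
  (∀ a b : A, φ (a * b) = φ b * φ a) ∧ (∀ a : A, φ (φ a) = a) ∧ (∀ s : I, φ (e s) = e s)

/-- The induced map `φ₁(δ)(a) = (φ₀ ⊗ φ₀)((δ(φ₀(a)))^∘)` on double derivations. -/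
def phi1 (φ : A →ₗ[ℂ] A) (δ : A →ₗ[ℂ] A ⊗[ℂ] A) : A →ₗ[ℂ] A ⊗[ℂ] A :=
  (TensorProduct.map φ φ) ∘ₗ flipT ∘ₗ δ ∘ₗ φ

/-- The `A`-bimodule structure on double derivations: `(a δ b)(c) = a ∗ δ(c) ∗ b`. -/
def bimodAct (a b : A) (δ : A →ₗ[ℂ] A ⊗[ℂ] A) : A →ₗ[ℂ] A ⊗[ℂ] A :=
  innerAct a b ∘ₗ δ

lemma conj_outer (φ : A →ₗ[ℂ] A) (hm : ∀ a b : A, φ (a * b) = φ b * φ a) (c d : A) :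
    (TensorProduct.map φ φ) ∘ₗ flipT ∘ₗ outerAct c d
      = outerAct (φ d) (φ c) ∘ₗ (TensorProduct.map φ φ) ∘ₗ flipT := by
  apply TensorProduct.ext'
  intro x y
  simp [flipT, outerAct, hm]

lemma conj_inner (φ : A →ₗ[ℂ] A) (hm : ∀ a b : A, φ (a * b) = φ b * φ a) (c d : A) :
    (TensorProduct.map φ φ) ∘ₗ flipT ∘ₗ innerAct c d
      = innerAct (φ d) (φ c) ∘ₗ (TensorProduct.map φ φ) ∘ₗ flipT := by
  apply TensorProduct.ext'
  intro x y
  simp [flipT, innerAct, hm]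

lemma conj_invol (φ : A →ₗ[ℂ] A) (hi : ∀ a : A, φ (φ a) = a) (x : A ⊗[ℂ] A) :
    (TensorProduct.map φ φ) (flipT ((TensorProduct.map φ φ) (flipT x))) = x := by
  induction x with
  | zero => simp
  | tmul a b => simp [flipT, hi]
  | add x y hx hy => simp [hx, hy]

/-- For an involutive anti-automorphism `φ₀` of `A` fixing the
idempotents: (1) `φ₁(δ)` is again a double derivation; (2) `φ₁` is involutive;
(3) `φ₁(a δ b) = φ₀(b) φ₁(δ) φ₀(a)`. -/
theorem phi1_double_derivation
    (e : I → A) (he : IsCompleteOrthIdem e)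
    (φ : A →ₗ[ℂ] A) (hφ : IsAntiInvolution e φ)
    (δ : A →ₗ[ℂ] A ⊗[ℂ] A) (hδ : IsDoubleDer e δ) :
    IsDoubleDer e (phi1 φ δ) ∧
    phi1 φ (phi1 φ δ) = δ ∧
    (∀ (a b : A) (δ' : A →ₗ[ℂ] A ⊗[ℂ] A), IsDoubleDer e δ' →
      phi1 φ (bimodAct a b δ') = bimodAct (φ b) (φ a) (phi1 φ δ')) := by
  obtain ⟨hm, hi, hfix⟩ := hφ
  have hφ1 : φ 1 = 1 := by
    rw [← he.2, map_sum]
    exact Finset.sum_congr rfl fun s _ => hfix s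
  refine ⟨⟨?_, ?_⟩, ?_, ?_⟩
  · intro s
    simp [phi1, hfix, hδ.1 s]
  · intro a b
    simp only [phi1, LinearMap.comp_apply]
    rw [hm a b, hδ.2 (φ b) (φ a), map_add, map_add]
    have h1 := LinearMap.congr_fun (conj_outer φ hm 1 (φ a)) (δ (φ b))
    have h2 := LinearMap.congr_fun (conj_outer φ hm (φ b) 1) (δ (φ a))
    simp only [LinearMap.comp_apply] at h1 h2
    rw [h1, h2, hi a, hi b, hφ1]
    exact add_comm _ _
  · ext a
    simp only [phi1, LinearMap.comp_apply]
    rw [hi a]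
    exact conj_invol φ hi (δ a)
  · intro a b δ' _
    ext c
    simp only [phi1, bimodAct, LinearMap.comp_apply]
    exact LinearMap.congr_fun (conj_inner φ hm a b) (δ' (φ c))

end Stmt7
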